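/- The symbol of the extended Rapcsák operator P₂ is involutive: the basis ê_1, …, ê_{2n} of V given by ê_j := h_j + j·v_j for 1 ≤ j ≤ n−1 (the scalar factor being the integer value of j), ê_n := S + v_1 + ⋯ + v_n, and ê_{n+j} := v_j for 1 ≤ j ≤ n, is quasi-regular, i.e. dim g₃(P₂) = dim g₂(P₂) + Σ_{k=1}^{2n} dim g₂(P₂)_{ê₁…ê_k}, where g₂(P₂) is the space of symmetric bilinear forms A on V with A(X, C) = 0 and A(P_h X, J Y) = A(P_h Y, J X) for all X, Y ∈ V, g₂(P₂)_{ê₁…ê_k} := { A ∈ g₂(P₂) : A(ê_j, X) = 0 for all X ∈ V and all 1 ≤ j ≤ k }, and g₃(P₂) is the space of symmetric trilinear forms A on V with A(X, Y, C) = 0 and A(X, P_h Y, J Z) = A(X, P_h Z, J Y) for all X, Y, Z ∈ V. -/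
import Mathlib


set_option synthInstance.maxHeartbeats 1000000
set_option maxHeartbeats 1000000

noncomputable section

/-- The pointwise model `V = (Fin n → ℝ) × (Fin n → ℝ)` of the double tangent space
`T_x(TM)` for a spray on an `n`-dimensional manifold, in an adapted basis. -/
abbrev V (n : ℕ) : Type := (Fin n → ℝ) × (Fin n → ℝ)

/-- The vertical endomorphism `J (x, y) = (0, x)`. -/
def Jmap (n : ℕ) : V n →ₗ[ℝ] V n where
  toFun p := (0, p.1)
  map_add' a b := by simp
  map_smul' c a := by simp

/-- The horizontal projector `P_h (x, y) = (x, 0)`. -/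
def Ph (n : ℕ) : V n →ₗ[ℝ] V n where
  toFun p := (p.1, 0)
  map_add' a b := by simp
  map_smul' c a := by simp

/-- The `j`-th standard basis vector of `Fin n → ℝ`, indexed by `1 ≤ j ≤ n`
(zero if `j` is out of range). -/
def dlt (n j : ℕ) : Fin n → ℝ := fun i => if (i : ℕ) + 1 = j then 1 else 0

/-- The horizontal basis vector `h_j`, `1 ≤ j ≤ n`. -/
def hvec (n j : ℕ) : V n := (dlt n j, 0)

/-- The vertical basis vector `v_j`, `1 ≤ j ≤ n`. -/
def vvec (n j : ℕ) : V n := (0, dlt n j)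

/-- The spray vector `S = h_n`. -/
def Svec (n : ℕ) : V n := hvec n n

/-- The Liouville vector `C = v_n = J S`. -/
def Cvec (n : ℕ) : V n := vvec n n

/-- Bilinear forms on `V n`. -/
abbrev Bil (n : ℕ) := V n →ₗ[ℝ] V n →ₗ[ℝ] ℝ

/-- Trilinear forms on `V n` (bundled). -/
abbrev Tri (n : ℕ) := V n →ₗ[ℝ] V n →ₗ[ℝ] V n →ₗ[ℝ] ℝ

/-- Trilinearity of a function `A : V × V × V → ℝ`. -/
def IsTrilin (n : ℕ) (A : V n → V n → V n → ℝ) : Prop :=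
  (∀ X X' Y Z, A (X + X') Y Z = A X Y Z + A X' Y Z) ∧
  (∀ (c : ℝ) X Y Z, A (c • X) Y Z = c * A X Y Z) ∧
  (∀ X Y Y' Z, A X (Y + Y') Z = A X Y Z + A X Y' Z) ∧
  (∀ (c : ℝ) X Y Z, A X (c • Y) Z = c * A X Y Z) ∧
  (∀ X Y Z Z', A X Y (Z + Z') = A X Y Z + A X Y Z') ∧
  (∀ (c : ℝ) X Y Z, A X Y (c • Z) = c * A X Y Z)

theorem IsTrilin.add {n : ℕ} {a b : V n → V n → V n → ℝ}
    (ha : IsTrilin n a) (hb : IsTrilin n b) : IsTrilin n (a + b) := by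
  obtain ⟨ha1, ha2, ha3, ha4, ha5, ha6⟩ := ha
  obtain ⟨hb1, hb2, hb3, hb4, hb5, hb6⟩ := hb
  refine ⟨fun X X' Y Z => ?_, fun c X Y Z => ?_, fun X Y Y' Z => ?_,
    fun c X Y Z => ?_, fun X Y Z Z' => ?_, fun c X Y Z => ?_⟩ <;>
      simp only [Pi.add_apply]
  · linear_combination ha1 X X' Y Z + hb1 X X' Y Z
  · linear_combination ha2 c X Y Z + hb2 c X Y Z
  · linear_combination ha3 X Y Y' Z + hb3 X Y Y' Z
  · linear_combination ha4 c X Y Z + hb4 c X Y Z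
  · linear_combination ha5 X Y Z Z' + hb5 X Y Z Z'
  · linear_combination ha6 c X Y Z + hb6 c X Y Z

theorem IsTrilin.smul {n : ℕ} (c : ℝ) {a : V n → V n → V n → ℝ}
    (ha : IsTrilin n a) : IsTrilin n (c • a) := by
  obtain ⟨ha1, ha2, ha3, ha4, ha5, ha6⟩ := ha
  refine ⟨fun X X' Y Z => ?_, fun d X Y Z => ?_, fun X Y Y' Z => ?_,
    fun d X Y Z => ?_, fun X Y Z Z' => ?_, fun d X Y Z => ?_⟩ <;>
      simp only [Pi.smul_apply, smul_eq_mul]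
  · linear_combination c * ha1 X X' Y Z
  · linear_combination c * ha2 d X Y Z
  · linear_combination c * ha3 X Y Y' Z
  · linear_combination c * ha4 d X Y Z
  · linear_combination c * ha5 X Y Z Z'
  · linear_combination c * ha6 d X Y Z

theorem IsTrilin.zero (n : ℕ) : IsTrilin n (0 : V n → V n → V n → ℝ) := by
  refine ⟨fun X X' Y Z => by simp, fun c X Y Z => by simp, fun X Y Y' Z => by simp,
    fun c X Y Z => by simp, fun X Y Z Z' => by simp, fun c X Y Z => by simp⟩

/-- The kernel `g₂(P₂)` of the symbol of the extended Rapcsák operator: symmetric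
bilinear forms `A` on `V` with `A(X, C) = 0` and `A(P_h X, J Y) = A(P_h Y, J X)`. -/
def g2P2 (n : ℕ) : Submodule ℝ (Bil n) where
  carrier := {A | (∀ X Y, A X Y = A Y X) ∧ (∀ X, A X (Cvec n) = 0) ∧
    (∀ X Y, A (Ph n X) (Jmap n Y) = A (Ph n Y) (Jmap n X))}
  add_mem' := by
    rintro a b ⟨ha1, ha2, ha3⟩ ⟨hb1, hb2, hb3⟩
    refine ⟨fun X Y => ?_, fun X => ?_, fun X Y => ?_⟩ <;>
      simp only [LinearMap.add_apply]
    · linear_combination ha1 X Y + hb1 X Y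
    · linear_combination ha2 X + hb2 X
    · linear_combination ha3 X Y + hb3 X Y
  zero_mem' := ⟨fun X Y => by simp, fun X => by simp, fun X Y => by simp⟩
  smul_mem' := by
    rintro c a ⟨ha1, ha2, ha3⟩
    refine ⟨fun X Y => ?_, fun X => ?_, fun X Y => ?_⟩ <;>
      simp only [LinearMap.smul_apply, smul_eq_mul]
    · linear_combination c * ha1 X Y
    · linear_combination c * ha2 X
    · linear_combination c * ha3 X Y

/-- The kernel `g₃(P₂)` of the prolonged symbol of the extended Rapcsák operator:
symmetric trilinear forms `A` on `V` with `A(X, Y, C) = 0` and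
`A(X, P_h Y, J Z) = A(X, P_h Z, J Y)`. -/
def g3P2 (n : ℕ) : Submodule ℝ (V n → V n → V n → ℝ) where
  carrier := {A | IsTrilin n A ∧
    (∀ X Y Z, A X Y Z = A Y X Z) ∧ (∀ X Y Z, A X Y Z = A X Z Y) ∧
    (∀ X Y, A X Y (Cvec n) = 0) ∧
    (∀ X Y Z, A X (Ph n Y) (Jmap n Z) = A X (Ph n Z) (Jmap n Y))}
  add_mem' := by
    rintro a b ⟨haT, ha1, ha2, ha3, ha4⟩ ⟨hbT, hb1, hb2, hb3, hb4⟩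
    refine ⟨haT.add hbT, fun X Y Z => ?_, fun X Y Z => ?_, fun X Y => ?_,
      fun X Y Z => ?_⟩ <;> simp only [Pi.add_apply]
    · linear_combination ha1 X Y Z + hb1 X Y Z
    · linear_combination ha2 X Y Z + hb2 X Y Z
    · linear_combination ha3 X Y + hb3 X Y
    · linear_combination ha4 X Y Z + hb4 X Y Z
  zero_mem' := ⟨IsTrilin.zero n, fun X Y Z => by simp, fun X Y Z => by simp,
    fun X Y => by simp, fun X Y Z => by simp⟩
  smul_mem' := by
    rintro c a ⟨haT, ha1, ha2, ha3, ha4⟩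
    refine ⟨haT.smul c, fun X Y Z => ?_, fun X Y Z => ?_, fun X Y => ?_,
      fun X Y Z => ?_⟩ <;> simp only [Pi.smul_apply, smul_eq_mul]
    · linear_combination c * ha1 X Y Z
    · linear_combination c * ha2 X Y Z
    · linear_combination c * ha3 X Y
    · linear_combination c * ha4 X Y Z

/-- The rotated basis vectors `ê_1, …, ê_{2n}` (1-indexed): `ê_j = h_j + j·v_j` for
`j < n`, `ê_n = S + v_1 + ⋯ + v_n`, and `ê_{n+j} = v_j`. -/
def ehat (n j : ℕ) : V n :=
  if j < n then hvec n j + (j : ℝ) • vvec n j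
  else if j = n then Svec n + ∑ i ∈ Finset.Icc 1 n, vvec n i
  else vvec n (j - n)

/-- The subspace `g₂(P₂)_{ê₁…ê_k}` of `g₂(P₂)` of forms annihilating `ê_1, …, ê_k`
in the first argument. -/
def g2P2e (n k : ℕ) : Submodule ℝ (Bil n) where
  carrier := {A | (∀ X Y, A X Y = A Y X) ∧ (∀ X, A X (Cvec n) = 0) ∧
    (∀ X Y, A (Ph n X) (Jmap n Y) = A (Ph n Y) (Jmap n X)) ∧
    (∀ j, 1 ≤ j → j ≤ k → ∀ X, A (ehat n j) X = 0)}
  add_mem' := by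
    rintro a b ⟨ha1, ha2, ha3, ha4⟩ ⟨hb1, hb2, hb3, hb4⟩
    refine ⟨fun X Y => ?_, fun X => ?_, fun X Y => ?_, fun j hj1 hj2 X => ?_⟩ <;>
      simp only [LinearMap.add_apply]
    · linear_combination ha1 X Y + hb1 X Y
    · linear_combination ha2 X + hb2 X
    · linear_combination ha3 X Y + hb3 X Y
    · linear_combination ha4 j hj1 hj2 X + hb4 j hj1 hj2 X
  zero_mem' := ⟨fun X Y => by simp, fun X => by simp, fun X Y => by simp,
    fun j hj1 hj2 X => by simp⟩
  smul_mem' := by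
    rintro c a ⟨ha1, ha2, ha3, ha4⟩
    refine ⟨fun X Y => ?_, fun X => ?_, fun X Y => ?_, fun j hj1 hj2 X => ?_⟩ <;>
      simp only [LinearMap.smul_apply, smul_eq_mul]
    · linear_combination c * ha1 X Y
    · linear_combination c * ha2 X
    · linear_combination c * ha3 X Y
    · linear_combination c * ha4 j hj1 hj2 X


namespace SymP2
open Finset

variable {n : ℕ}

abbrev ii (n : ℕ) := Sum (Fin n) (Fin n)

def ev (i : Fin n) : Fin n → ℝ := fun m => if m = i then 1 else 0

def bas : ii n → V n := Sum.elim (fun i => (ev i, 0)) (fun i => (0, ev i))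

def cf : ii n → V n → ℝ := Sum.elim (fun i X => X.1 i) (fun i X => X.2 i)

lemma cf_bas (p q : ii n) : cf p (bas q) = if p = q then 1 else 0 := by
  cases p <;> cases q <;>
    simp [cf, bas, ev] <;> aesop

lemma vdecomp (X : V n) : X = ∑ p : ii n, cf p X • bas p := by
  rw [Fintype.sum_sum_type]
  refine Prod.ext ?_ ?_ <;> funext m <;>
    simp [cf, bas, Prod.fst_sum, Prod.snd_sum, Finset.sum_apply, ev, mul_ite,
      Finset.sum_ite_eq]

def Bmk (M : ii n → ii n → ℝ) : Bil n where
  toFun X :=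
    { toFun := fun Y => ∑ p : ii n, ∑ q : ii n, M p q * cf p X * cf q Y
      map_add' := by
        intro Y Z
        rw [← Finset.sum_add_distrib]
        refine Finset.sum_congr rfl fun p _ => ?_
        rw [← Finset.sum_add_distrib]
        refine Finset.sum_congr rfl fun q _ => ?_
        have : cf q (Y + Z) = cf q Y + cf q Z := by cases q <;> rfl
        rw [this]; ring
      map_smul' := by
        intro c Y
        simp only [RingHom.id_apply, smul_eq_mul, Finset.mul_sum]
        refine Finset.sum_congr rfl fun p _ => Finset.sum_congr rfl fun q _ => ?_
        have : cf q (c • Y) = c * cf q Y := by cases q <;> rfl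
        rw [this]; ring }
  map_add' := by
    intro X Z
    refine LinearMap.ext fun Y => ?_
    simp only [LinearMap.coe_mk, AddHom.coe_mk, LinearMap.add_apply]
    rw [← Finset.sum_add_distrib]
    refine Finset.sum_congr rfl fun p _ => ?_
    rw [← Finset.sum_add_distrib]
    refine Finset.sum_congr rfl fun q _ => ?_
    have : cf p (X + Z) = cf p X + cf p Z := by cases p <;> rfl
    rw [this]; ring
  map_smul' := by
    intro c X
    refine LinearMap.ext fun Y => ?_
    simp only [LinearMap.coe_mk, AddHom.coe_mk, RingHom.id_apply, LinearMap.smul_apply,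
      smul_eq_mul, Finset.mul_sum]
    refine Finset.sum_congr rfl fun p _ => Finset.sum_congr rfl fun q _ => ?_
    have : cf p (c • X) = c * cf p X := by cases p <;> rfl
    rw [this]; ring

lemma Bmk_apply (M : ii n → ii n → ℝ) (X Y : V n) :
    Bmk M X Y = ∑ p : ii n, ∑ q : ii n, M p q * cf p X * cf q Y := rfl

lemma Bmk_bas (M : ii n → ii n → ℝ) (p q : ii n) : Bmk M (bas p) (bas q) = M p q := by
  rw [Bmk_apply]
  rw [Finset.sum_eq_single p]
  · rw [Finset.sum_eq_single q]
    · simp [cf_bas]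
    · intro b _ hb; simp [cf_bas, hb]
    · simp
  · intro b _ hb; simp [cf_bas, hb]
  · simp

lemma bil_apply (A : Bil n) (X Y : V n) :
    A X Y = ∑ p : ii n, ∑ q : ii n, A (bas p) (bas q) * cf p X * cf q Y := by
  conv_lhs => rw [vdecomp X, vdecomp Y]
  simp only [map_sum, map_smul, LinearMap.sum_apply, LinearMap.smul_apply, smul_eq_mul,
    Finset.mul_sum, Finset.sum_apply]
  rw [Finset.sum_comm]
  refine Finset.sum_congr rfl fun p _ => Finset.sum_congr rfl fun q _ => by ring

lemma bil_ext {A B : Bil n} (h : ∀ p q, A (bas p) (bas q) = B (bas p) (bas q)) : A = B := by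
  refine LinearMap.ext fun X => LinearMap.ext fun Y => ?_
  rw [bil_apply, bil_apply]
  exact Finset.sum_congr rfl fun p _ => Finset.sum_congr rfl fun q _ => by rw [h]

lemma bil_eq_Bmk (A : Bil n) : A = Bmk (fun p q => A (bas p) (bas q)) :=
  bil_ext fun p q => by rw [Bmk_bas]

end SymP2

namespace SymP2
open Finset

variable {n : ℕ}

lemma cf_add (p : ii n) (X Y : V n) : cf p (X + Y) = cf p X + cf p Y := by cases p <;> rfl
lemma cf_smul (p : ii n) (c : ℝ) (X : V n) : cf p (c • X) = c * cf p X := by cases p <;> rfl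

def Tmk (M : ii n → ii n → ii n → ℝ) : V n → V n → V n → ℝ :=
  fun X Y Z => ∑ p : ii n, ∑ q : ii n, ∑ r : ii n, M p q r * cf p X * cf q Y * cf r Z

lemma Tmk_isTrilin (M : ii n → ii n → ii n → ℝ) : IsTrilin n (Tmk M) := by
  refine ⟨fun X X' Y Z => ?_, fun c X Y Z => ?_, fun X Y Y' Z => ?_, fun c X Y Z => ?_,
    fun X Y Z Z' => ?_, fun c X Y Z => ?_⟩ <;>
  · simp only [Tmk, cf_add, cf_smul, Finset.mul_sum, ← Finset.sum_add_distrib]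
    refine Finset.sum_congr rfl fun p _ => Finset.sum_congr rfl fun q _ =>
      Finset.sum_congr rfl fun r _ => by ring

lemma lin_expand (f : V n → ℝ) (hadd : ∀ a b, f (a + b) = f a + f b)
    (hsmul : ∀ (c : ℝ) a, f (c • a) = c * f a) (X : V n) :
    f X = ∑ p : ii n, cf p X * f (bas p) := by
  let F : V n →ₗ[ℝ] ℝ :=
    { toFun := f, map_add' := hadd, map_smul' := by intro c a; simp [hsmul] }
  have : f X = F X := rfl
  rw [this]
  conv_lhs => rw [vdecomp X]
  rw [map_sum]
  exact Finset.sum_congr rfl fun p _ => by rw [map_smul]; simp [F]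

lemma tri_apply {A : V n → V n → V n → ℝ} (hA : IsTrilin n A) (X Y Z : V n) :
    A X Y Z = Tmk (fun p q r => A (bas p) (bas q) (bas r)) X Y Z := by
  obtain ⟨h1, h2, h3, h4, h5, h6⟩ := hA
  rw [lin_expand (fun X => A X Y Z) (fun a b => h1 a b Y Z) (fun c a => h2 c a Y Z) X]
  rw [Tmk]
  refine Finset.sum_congr rfl fun p _ => ?_
  rw [lin_expand (fun Y => A (bas p) Y Z) (fun a b => h3 _ a b Z) (fun c a => h4 c _ a Z) Y,
    Finset.mul_sum]
  refine Finset.sum_congr rfl fun q _ => ?_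
  rw [lin_expand (fun Z => A (bas p) (bas q) Z) (fun a b => h5 _ _ a b) (fun c a => h6 c _ _ a) Z,
    Finset.mul_sum, Finset.mul_sum]
  refine Finset.sum_congr rfl fun r _ => by ring

lemma Tmk_bas (M : ii n → ii n → ii n → ℝ) (p q r : ii n) :
    Tmk M (bas p) (bas q) (bas r) = M p q r := by
  rw [Tmk, Finset.sum_eq_single p]
  · rw [Finset.sum_eq_single q]
    · rw [Finset.sum_eq_single r]
      · simp [cf_bas]
      · intro b _ hb; simp [cf_bas, hb]
      · simp
    · intro b _ hb; simp [cf_bas, hb]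
    · simp
  · intro b _ hb
    simp [cf_bas, hb, Finset.sum_eq_zero]
  · simp

lemma tri_eq_Tmk {A : V n → V n → V n → ℝ} (hA : IsTrilin n A) :
    A = Tmk (fun p q r => A (bas p) (bas q) (bas r)) := by
  funext X Y Z; exact tri_apply hA X Y Z

/-! basis vectors vs the given `dlt`, `Ph`, `Jmap`, `Cvec`, `ehat` -/

lemma dlt_eq (j : ℕ) (h1 : 1 ≤ j) (h2 : j ≤ n) :
    dlt n j = ev (⟨j - 1, by omega⟩ : Fin n) := by
  funext i; simp only [dlt, ev]
  by_cases h : (i : ℕ) + 1 = j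
  · rw [if_pos h, if_pos (by apply Fin.ext; simp; omega)]
  · rw [if_neg h, if_neg (fun hc => h (by rw [hc]; simp; omega))]

lemma hvec_eq (j : ℕ) (h1 : 1 ≤ j) (h2 : j ≤ n) :
    hvec n j = bas (Sum.inl (⟨j - 1, by omega⟩ : Fin n)) := by
  simp [hvec, bas, dlt_eq j h1 h2]

lemma vvec_eq (j : ℕ) (h1 : 1 ≤ j) (h2 : j ≤ n) :
    vvec n j = bas (Sum.inr (⟨j - 1, by omega⟩ : Fin n)) := by
  simp [vvec, bas, dlt_eq j h1 h2]

lemma Ph_bas_inl (i : Fin n) : Ph n (bas (Sum.inl i)) = bas (Sum.inl i) := rfl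
lemma J_bas_inl (i : Fin n) : Jmap n (bas (Sum.inl i)) = bas (Sum.inr i) := rfl

lemma cf_Ph_inl (i : Fin n) (X : V n) : cf (Sum.inl i) (Ph n X) = X.1 i := rfl
lemma cf_Ph_inr (i : Fin n) (X : V n) : cf (Sum.inr i) (Ph n X) = 0 := rfl
lemma cf_J_inl (i : Fin n) (X : V n) : cf (Sum.inl i) (Jmap n X) = 0 := rfl
lemma cf_J_inr (i : Fin n) (X : V n) : cf (Sum.inr i) (Jmap n X) = X.1 i := rfl

lemma Cvec_eq (hn : 1 ≤ n) : Cvec n = bas (Sum.inr ⟨n - 1, by omega⟩) :=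
  vvec_eq n hn le_rfl

lemma ehat_small {j : ℕ} (h1 : 1 ≤ j) (h2 : j < n) :
    ehat n j = bas (Sum.inl ⟨j - 1, by omega⟩) + ((j : ℝ)) • bas (Sum.inr ⟨j - 1, by omega⟩) := by
  rw [ehat, if_pos h2, hvec_eq j h1 (le_of_lt h2), vvec_eq j h1 (le_of_lt h2)]

lemma ehat_top (hn : 1 ≤ n) :
    ehat n n = bas (Sum.inl ⟨n - 1, by omega⟩) + ∑ m : Fin n, bas (Sum.inr m) := by
  rw [ehat, if_neg (lt_irrefl n), if_pos rfl]
  congr 1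
  · rw [Svec, hvec_eq n hn le_rfl]
  · rw [show Finset.Icc 1 n = Finset.Ico 1 (n + 1) by rfl, Finset.sum_Ico_eq_sum_range]
    simp only [add_tsub_cancel_right]
    rw [← Fin.sum_univ_eq_sum_range (fun i => vvec n (1 + i)) n]
    refine Finset.sum_congr rfl fun m _ => ?_
    rw [show 1 + (m : ℕ) = (m : ℕ) + 1 by omega, vvec_eq ((m : ℕ) + 1) (by omega) (by omega)]
    exact congrArg (fun t : Fin n => bas (Sum.inr t)) (Fin.ext (by simp))

end SymP2

namespace SymP2
open Finset

variable {n : ℕ}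

def FA (n k : ℕ) := {p : Fin n × Fin n // k ≤ (p.1 : ℕ) ∧ p.1 ≤ p.2}
def FB (n k : ℕ) := {p : Fin n × Fin n // k ≤ (p.1 : ℕ) ∧ p.1 ≤ p.2 ∧ (p.2 : ℕ) + 1 < n}
def FC (n k : ℕ) := {p : Fin n × Fin n // p.1 ≤ p.2 ∧ (p.2 : ℕ) + 1 < n ∧ ((p.2 : ℕ) < k → p.1 = p.2)}

instance (n k : ℕ) : Fintype (FA n k) := by unfold FA; infer_instance
instance (n k : ℕ) : Fintype (FB n k) := by unfold FB; infer_instance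
instance (n k : ℕ) : Fintype (FC n k) := by unfold FC; infer_instance

abbrev FIdx (n k : ℕ) := FA n k ⊕ (FB n k ⊕ FC n k)

def symm2 (g : Fin n → Fin n → ℝ) : Fin n → Fin n → ℝ :=
  fun i j => if i ≤ j then g i j else g j i

lemma symm2_symm (g : Fin n → Fin n → ℝ) (i j : Fin n) : symm2 g i j = symm2 g j i := by
  unfold symm2
  by_cases h1 : i ≤ j <;> by_cases h2 : j ≤ i
  · have : i = j := le_antisymm h1 h2; subst this; rfl
  · rw [if_pos h1, if_neg h2]
  · rw [if_neg h1, if_pos h2]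
  · exact absurd (le_total i j) (by tauto)

def cS (n k : ℕ) (x : FIdx n k → ℝ) : Fin n → Fin n → ℝ := fun i j =>
  if h : i ≤ j ∧ (j : ℕ) + 1 < n ∧ ((j : ℕ) < k → i = j) then x (Sum.inr (Sum.inr ⟨(i, j), h⟩))
  else 0

def cF (n k : ℕ) (x : FIdx n k → ℝ) : Fin n → Fin n → ℝ := symm2 (cS n k x)

def bS (n k : ℕ) (x : FIdx n k → ℝ) : Fin n → Fin n → ℝ := fun i j =>
  if (i : ℕ) < k then (-(((i : ℕ) : ℝ) + 1)) * cF n k x i j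
  else if h : k ≤ (i : ℕ) ∧ i ≤ j ∧ (j : ℕ) + 1 < n then x (Sum.inr (Sum.inl ⟨(i, j), h⟩))
  else 0

def bF (n k : ℕ) (x : FIdx n k → ℝ) : Fin n → Fin n → ℝ := symm2 (bS n k x)

def aS (n k : ℕ) (x : FIdx n k → ℝ) : Fin n → Fin n → ℝ := fun i j =>
  if (i : ℕ) < k then (-(((i : ℕ) : ℝ) + 1)) * bF n k x i j
  else if h : k ≤ (i : ℕ) ∧ i ≤ j then x (Sum.inl ⟨(i, j), h⟩)
  else 0

def aF (n k : ℕ) (x : FIdx n k → ℝ) : Fin n → Fin n → ℝ := symm2 (aS n k x)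

def Ment (n k : ℕ) (x : FIdx n k → ℝ) : ii n → ii n → ℝ
  | .inl i, .inl j => aF n k x i j
  | .inl i, .inr j => bF n k x i j
  | .inr i, .inl j => bF n k x j i
  | .inr i, .inr j => cF n k x i j

section entry
variable {k : ℕ} {x : FIdx n k → ℝ}

lemma cF_sym (i j : Fin n) : cF n k x i j = cF n k x j i := symm2_symm _ i j
lemma bF_sym (i j : Fin n) : bF n k x i j = bF n k x j i := symm2_symm _ i j
lemma aF_sym (i j : Fin n) : aF n k x i j = aF n k x j i := symm2_symm _ i j

lemma cF_last (i j : Fin n) (hj : (j : ℕ) + 1 = n) : cF n k x i j = 0 := by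
  have hij : i ≤ j := by rw [Fin.le_def]; have := i.2; omega
  unfold cF symm2
  rw [if_pos hij]
  unfold cS
  rw [dif_neg (by rintro ⟨-, h2, -⟩; omega)]

lemma cF_small (i j : Fin n) (hi : (i : ℕ) < k) (hj : (j : ℕ) < k) (hij : i ≠ j) :
    cF n k x i j = 0 := by
  unfold cF symm2
  by_cases h : i ≤ j
  · rw [if_pos h]; unfold cS
    rw [dif_neg (by rintro ⟨-, -, h3⟩; exact hij (h3 hj))]
  · rw [if_neg h]; unfold cS
    rw [dif_neg (by rintro ⟨-, -, h3⟩; exact hij (h3 hi).symm)]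

lemma bF_row (i j : Fin n) (hi : (i : ℕ) < k) :
    bF n k x i j = (-(((i : ℕ) : ℝ) + 1)) * cF n k x i j := by
  unfold bF symm2
  by_cases h : i ≤ j
  · rw [if_pos h]; unfold bS; rw [if_pos hi]
  · rw [if_neg h]
    have hji : (j : ℕ) < (i : ℕ) := by rw [Fin.le_def, not_le] at h; exact h
    have hj : (j : ℕ) < k := by omega
    have hne : j ≠ i := fun e => (by omega : (j:ℕ) ≠ (i:ℕ)) (congrArg Fin.val e)
    unfold bS
    rw [if_pos hj, cF_small j i hj hi hne, cF_small i j hi hj (Ne.symm hne)]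
    ring

lemma aF_row (i j : Fin n) (hi : (i : ℕ) < k) :
    aF n k x i j = (-(((i : ℕ) : ℝ) + 1)) * bF n k x i j := by
  unfold aF symm2
  by_cases h : i ≤ j
  · rw [if_pos h]; unfold aS; rw [if_pos hi]
  · rw [if_neg h]
    have hji : (j : ℕ) < (i : ℕ) := by rw [Fin.le_def, not_le] at h; exact h
    have hj : (j : ℕ) < k := by omega
    have hne : j ≠ i := fun e => (by omega : (j:ℕ) ≠ (i:ℕ)) (congrArg Fin.val e)
    unfold aS
    rw [if_pos hj, bF_row j i hj, bF_row i j hi, cF_small j i hj hi hne,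
      cF_small i j hi hj (Ne.symm hne)]
    ring

lemma bF_last (hn : 1 ≤ n) (i : Fin n) : bF n k x i ⟨n - 1, by omega⟩ = 0 := by
  have hij : i ≤ (⟨n - 1, by omega⟩ : Fin n) := by rw [Fin.le_def]; have := i.2; simp; omega
  unfold bF symm2
  rw [if_pos hij]
  unfold bS
  by_cases hi : (i : ℕ) < k
  · rw [if_pos hi, cF_last i _ (by simp; omega)]; ring
  · rw [if_neg hi, dif_neg (by rintro ⟨-, -, h3⟩; simp at h3; omega)]

lemma aF_free (i j : Fin n) (h : k ≤ (i : ℕ) ∧ i ≤ j) :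
    aF n k x i j = x (Sum.inl ⟨(i, j), h⟩) := by
  unfold aF symm2; rw [if_pos h.2]; unfold aS
  rw [if_neg (by omega), dif_pos h]

lemma bF_free (i j : Fin n) (h : k ≤ (i : ℕ) ∧ i ≤ j ∧ (j : ℕ) + 1 < n) :
    bF n k x i j = x (Sum.inr (Sum.inl ⟨(i, j), h⟩)) := by
  unfold bF symm2; rw [if_pos h.2.1]; unfold bS
  rw [if_neg (by omega), dif_pos h]

lemma cF_free (i j : Fin n) (h : i ≤ j ∧ (j : ℕ) + 1 < n ∧ ((j : ℕ) < k → i = j)) :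
    cF n k x i j = x (Sum.inr (Sum.inr ⟨(i, j), h⟩)) := by
  unfold cF symm2; rw [if_pos h.1]; unfold cS; rw [dif_pos h]

lemma Ment_symm (p q : ii n) : Ment n k x p q = Ment n k x q p := by
  cases p <;> cases q <;> simp only [Ment]
  · exact aF_sym _ _
  · exact cF_sym _ _

end entry

lemma Bmk_bas_left (M : ii n → ii n → ℝ) (p : ii n) (X : V n) :
    Bmk M (bas p) X = ∑ q : ii n, M p q * cf q X := by
  rw [Bmk_apply, Finset.sum_eq_single p]
  · refine Finset.sum_congr rfl fun q _ => ?_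
    rw [cf_bas, if_pos rfl]; ring
  · intro b _ hb
    refine Finset.sum_eq_zero fun q _ => ?_
    rw [cf_bas, if_neg hb]; ring
  · simp

lemma Bmk_bas_right (M : ii n → ii n → ℝ) (X : V n) (q : ii n) :
    Bmk M X (bas q) = ∑ p : ii n, M p q * cf p X := by
  rw [Bmk_apply]
  refine Finset.sum_congr rfl fun p _ => ?_
  rw [Finset.sum_eq_single q]
  · rw [cf_bas, if_pos rfl]; ring
  · intro b _ hb; rw [cf_bas, if_neg hb]; ring
  · simp

lemma Bmk_PhJ (M : ii n → ii n → ℝ) (X Y : V n) :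
    Bmk M (Ph n X) (Jmap n Y) =
      ∑ i : Fin n, ∑ j : Fin n, M (.inl i) (.inr j) * X.1 i * Y.1 j := by
  simp only [Bmk_apply, Fintype.sum_sum_type, cf_Ph_inl, cf_Ph_inr, cf_J_inl, cf_J_inr,
    mul_zero, zero_mul, Finset.sum_const_zero, add_zero, zero_add]

lemma Bmk_mem_g2e (hn : 1 ≤ n) (hk : k ≤ n - 1) (x : FIdx n k → ℝ) :
    Bmk (Ment n k x) ∈ g2P2e n k := by
  refine ⟨fun X Y => ?_, fun X => ?_, fun X Y => ?_, fun j hj1 hjk X => ?_⟩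
  · rw [Bmk_apply, Bmk_apply, Finset.sum_comm]
    refine Finset.sum_congr rfl fun p _ => Finset.sum_congr rfl fun q _ => ?_
    rw [Ment_symm]; ring
  · rw [Cvec_eq hn, Bmk_bas_right]
    refine Finset.sum_eq_zero fun p _ => ?_
    have h0 : Ment n k x p (Sum.inr ⟨n - 1, by omega⟩) = 0 := by
      cases p with
      | inl i => exact bF_last hn i
      | inr i => exact cF_last _ _ (by simp; omega)
    rw [h0, zero_mul]
  · rw [Bmk_PhJ, Bmk_PhJ, Finset.sum_comm]
    refine Finset.sum_congr rfl fun i _ => Finset.sum_congr rfl fun j _ => ?_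
    show Ment n k x (.inl j) (.inr i) * X.1 j * Y.1 i = Ment n k x (.inl i) (.inr j) * Y.1 i * X.1 j
    simp only [Ment]
    rw [bF_sym]; ring
  · have hjn : j < n := by omega
    rw [ehat_small hj1 hjn, map_add, LinearMap.add_apply, map_smul, LinearMap.smul_apply,
      Bmk_bas_left, Bmk_bas_left, smul_eq_mul, Finset.mul_sum, ← Finset.sum_add_distrib]
    refine Finset.sum_eq_zero fun q _ => ?_
    set j0 : Fin n := ⟨j - 1, by omega⟩ with hj0def
    have hj0 : (j0 : ℕ) < k := by simp [hj0def]; omega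
    have hcast : ((j0 : ℕ) : ℝ) + 1 = (j : ℝ) := by
      have h1 : (j0 : ℕ) + 1 = j := by simp [hj0def]; omega
      calc ((j0 : ℕ) : ℝ) + 1 = (((j0 : ℕ) + 1 : ℕ) : ℝ) := by push_cast; ring
        _ = (j : ℝ) := by rw [h1]
    cases q with
    | inl m =>
      simp only [Ment]
      rw [aF_row j0 m hj0, bF_sym m j0, ← hcast]
      ring
    | inr m =>
      simp only [Ment]
      rw [bF_row j0 m hj0, ← hcast]
      ring

def readout (n k : ℕ) (A : Bil n) : FIdx n k → ℝ
  | .inl t => A (bas (.inl t.1.1)) (bas (.inl t.1.2))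
  | .inr (.inl t) => A (bas (.inl t.1.1)) (bas (.inr t.1.2))
  | .inr (.inr t) => A (bas (.inr t.1.1)) (bas (.inr t.1.2))

lemma ent_eq (hn : 1 ≤ n) (hk : k ≤ n - 1) {A : Bil n} (hA : A ∈ g2P2e n k) :
    ∀ p q, Ment n k (readout n k A) p q = A (bas p) (bas q) := by
  obtain ⟨hsym, hC, hPJ, hE⟩ := hA
  have hCb : ∀ p : ii n, A (bas p) (bas (Sum.inr (⟨n - 1, by omega⟩ : Fin n))) = 0 := by
    intro p
    have h := hC (bas p)
    rwa [Cvec_eq hn] at h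
  have hPJb : ∀ i j : Fin n,
      A (bas (.inl i)) (bas (.inr j)) = A (bas (.inl j)) (bas (.inr i)) := by
    intro i j
    exact hPJ (bas (.inl i)) (bas (.inl j))
  have hrow : ∀ i : Fin n, (i : ℕ) < k → ∀ q : ii n,
      A (bas (.inl i)) (bas q) = (-(((i : ℕ) : ℝ) + 1)) * A (bas (.inr i)) (bas q) := by
    intro i hi q
    have h2 : (i : ℕ) + 1 ≤ k := by omega
    have h := hE ((i : ℕ) + 1) (by omega) h2 (bas q)
    rw [ehat_small (by omega) (by omega)] at h
    have he : (⟨(i : ℕ) + 1 - 1, by omega⟩ : Fin n) = i := Fin.ext (by simp)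
    rw [he] at h
    rw [map_add, LinearMap.add_apply, map_smul, LinearMap.smul_apply, smul_eq_mul] at h
    have hc : (((i : ℕ) + 1 : ℕ) : ℝ) = ((i : ℕ) : ℝ) + 1 := by push_cast; ring
    rw [hc] at h
    linarith
  have hcsmall : ∀ i j : Fin n, (i : ℕ) < k → (j : ℕ) < k → i ≠ j →
      A (bas (.inr i)) (bas (.inr j)) = 0 := by
    intro i j hi hj hij
    have e1 := hrow i hi (Sum.inr j)
    have e2 := hrow j hj (Sum.inr i)
    have e3 := hPJb i j
    have e4 := hsym (bas (Sum.inr i)) (bas (Sum.inr j))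
    have hvne : ((j : ℕ) : ℝ) - ((i : ℕ) : ℝ) ≠ 0 := by
      have : (i : ℕ) ≠ (j : ℕ) := fun e => hij (Fin.ext e)
      intro hcon
      exact this (by exact_mod_cast (by linarith : ((i : ℕ) : ℝ) = ((j : ℕ) : ℝ)))
    have key : (((j : ℕ) : ℝ) - ((i : ℕ) : ℝ)) * A (bas (.inr i)) (bas (.inr j)) = 0 := by
      linear_combination (-1 : ℝ) * e1 + e2 + e3 + (((j : ℕ) : ℝ) + 1) * e4
    rcases mul_eq_zero.mp key with h' | h'
    · exact absurd h' hvne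
    · exact h'
  have hcsorted : ∀ i j : Fin n, i ≤ j →
      cS n k (readout n k A) i j = A (bas (.inr i)) (bas (.inr j)) := by
    intro i j hij
    unfold cS
    by_cases h : i ≤ j ∧ (j : ℕ) + 1 < n ∧ ((j : ℕ) < k → i = j)
    · rw [dif_pos h]; rfl
    · rw [dif_neg h]
      by_cases hjn : (j : ℕ) + 1 < n
      · have h3 : ¬((j : ℕ) < k → i = j) := fun hr => h ⟨hij, hjn, hr⟩
        push_neg at h3
        have hik : (i : ℕ) < k := by
          have := Fin.le_def.mp hij; omega
        exact (hcsmall i j hik h3.1 h3.2).symm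
      · have hj : j = (⟨n - 1, by omega⟩ : Fin n) := Fin.ext (by simp; have := j.2; omega)
        rw [hj]
        exact (hCb _).symm
  have hcblock : ∀ i j : Fin n,
      cF n k (readout n k A) i j = A (bas (.inr i)) (bas (.inr j)) := by
    intro i j
    unfold cF symm2
    by_cases hij : i ≤ j
    · rw [if_pos hij]; exact hcsorted i j hij
    · rw [if_neg hij, hcsorted j i (le_of_not_ge hij)]
      exact (hsym _ _).symm
  have hbsorted : ∀ i j : Fin n, i ≤ j →
      bS n k (readout n k A) i j = A (bas (.inl i)) (bas (.inr j)) := by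
    intro i j hij
    unfold bS
    by_cases hik : (i : ℕ) < k
    · rw [if_pos hik, hcblock]
      exact (hrow i hik (Sum.inr j)).symm
    · rw [if_neg hik]
      by_cases h : k ≤ (i : ℕ) ∧ i ≤ j ∧ (j : ℕ) + 1 < n
      · rw [dif_pos h]; rfl
      · rw [dif_neg h]
        have hjn : ¬((j : ℕ) + 1 < n) := fun hh => h ⟨by omega, hij, hh⟩
        have hj : j = (⟨n - 1, by omega⟩ : Fin n) := Fin.ext (by simp; have := j.2; omega)
        rw [hj]
        exact (hCb _).symm
  have hbblock : ∀ i j : Fin n,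
      bF n k (readout n k A) i j = A (bas (.inl i)) (bas (.inr j)) := by
    intro i j
    unfold bF symm2
    by_cases hij : i ≤ j
    · rw [if_pos hij]; exact hbsorted i j hij
    · rw [if_neg hij, hbsorted j i (le_of_not_ge hij)]
      exact hPJb j i
  have hasorted : ∀ i j : Fin n, i ≤ j →
      aS n k (readout n k A) i j = A (bas (.inl i)) (bas (.inl j)) := by
    intro i j hij
    unfold aS
    by_cases hik : (i : ℕ) < k
    · rw [if_pos hik, hbblock]
      have e1 := hrow i hik (Sum.inl j)
      have e2 := hsym (bas (Sum.inr i)) (bas (Sum.inl j))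
      have e3 := hPJb j i
      rw [e1, e2, e3]
    · rw [if_neg hik, dif_pos ⟨by omega, hij⟩]; rfl
  have hablock : ∀ i j : Fin n,
      aF n k (readout n k A) i j = A (bas (.inl i)) (bas (.inl j)) := by
    intro i j
    unfold aF symm2
    by_cases hij : i ≤ j
    · rw [if_pos hij]; exact hasorted i j hij
    · rw [if_neg hij, hasorted j i (le_of_not_ge hij)]
      exact (hsym _ _).symm
  intro p q
  cases p with
  | inl i =>
    cases q with
    | inl j => exact hablock i j
    | inr j => exact hbblock i j
  | inr i =>
    cases q with
    | inl j =>
      show bF n k (readout n k A) j i = A (bas (.inr i)) (bas (.inl j))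
      rw [hbblock j i]
      exact (hsym _ _).symm
    | inr j => exact hcblock i j

def Phig2 (n k : ℕ) : g2P2e n k →ₗ[ℝ] (FIdx n k → ℝ) where
  toFun A := readout n k (A : Bil n)
  map_add' A B := by
    funext idx
    rcases idx with t | t | t <;>
      simp [readout, Submodule.coe_add, LinearMap.add_apply]
  map_smul' c A := by
    funext idx
    rcases idx with t | t | t <;>
      simp [readout, Submodule.coe_smul, LinearMap.smul_apply]

lemma g2e_equiv (hn : 1 ≤ n) (hk : k ≤ n - 1) :
    Nonempty ((g2P2e n k) ≃ₗ[ℝ] (FIdx n k → ℝ)) := by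
  refine ⟨LinearEquiv.ofBijective (Phig2 n k) ⟨?_, ?_⟩⟩
  · intro A B hAB
    have kA : (A : Bil n) = Bmk (Ment n k (readout n k (A : Bil n))) :=
      bil_ext fun p q => by rw [Bmk_bas]; exact (ent_eq hn hk A.2 p q).symm
    have kB : (B : Bil n) = Bmk (Ment n k (readout n k (B : Bil n))) :=
      bil_ext fun p q => by rw [Bmk_bas]; exact (ent_eq hn hk B.2 p q).symm
    have hread : readout n k (A : Bil n) = readout n k (B : Bil n) := hAB
    refine Subtype.ext ?_
    rw [kA, kB, hread]
  · intro x
    refine ⟨⟨Bmk (Ment n k x), Bmk_mem_g2e hn hk x⟩, ?_⟩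
    funext idx
    rcases idx with ⟨⟨i, j⟩, h⟩ | ⟨⟨i, j⟩, h⟩ | ⟨⟨i, j⟩, h⟩
    · show Bmk (Ment n k x) (bas (.inl i)) (bas (.inl j)) = _
      rw [Bmk_bas]
      exact aF_free i j h
    · show Bmk (Ment n k x) (bas (.inl i)) (bas (.inr j)) = _
      rw [Bmk_bas]
      exact bF_free i j h
    · show Bmk (Ment n k x) (bas (.inr i)) (bas (.inr j)) = _
      rw [Bmk_bas]
      exact cF_free i j h

lemma g2e_finrank (hn : 1 ≤ n) (hk : k ≤ n - 1) :
    Module.finrank ℝ (g2P2e n k) =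
      Fintype.card (FA n k) + Fintype.card (FB n k) + Fintype.card (FC n k) := by
  obtain ⟨e⟩ := g2e_equiv hn hk
  rw [e.finrank_eq, Module.finrank_fintype_fun_eq_card, Fintype.card_sum, Fintype.card_sum]
  ring

end SymP2

namespace SymP2
open Finset

variable {n : ℕ}

lemma g2P2_eq_e0 : g2P2 n = g2P2e n 0 := by
  ext A
  constructor
  · rintro ⟨h1, h2, h3⟩
    exact ⟨h1, h2, h3, fun j hj1 hj2 X => by omega⟩
  · rintro ⟨h1, h2, h3, -⟩
    exact ⟨h1, h2, h3⟩

lemma g2e_bot (hn : 1 ≤ n) {k : ℕ} (hk : n ≤ k) : g2P2e n k = ⊥ := by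
  rw [eq_bot_iff]
  rintro A ⟨hsym, hC, hPJ, hE⟩
  simp only [Submodule.mem_bot]
  have hCb : ∀ p : ii n, A (bas p) (bas (Sum.inr (⟨n - 1, by omega⟩ : Fin n))) = 0 := by
    intro p
    have h := hC (bas p)
    rwa [Cvec_eq hn] at h
  have hPJb : ∀ i j : Fin n,
      A (bas (.inl i)) (bas (.inr j)) = A (bas (.inl j)) (bas (.inr i)) :=
    fun i j => hPJ (bas (.inl i)) (bas (.inl j))
  have hrow : ∀ i : Fin n, (i : ℕ) + 1 < n → ∀ q : ii n,
      A (bas (.inl i)) (bas q) = (-(((i : ℕ) : ℝ) + 1)) * A (bas (.inr i)) (bas q) := by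
    intro i hi q
    have h := hE ((i : ℕ) + 1) (by omega) (by omega) (bas q)
    rw [ehat_small (by omega) (by omega)] at h
    have he : (⟨(i : ℕ) + 1 - 1, by omega⟩ : Fin n) = i := Fin.ext (by simp)
    rw [he, map_add, LinearMap.add_apply, map_smul, LinearMap.smul_apply, smul_eq_mul] at h
    have hc : (((i : ℕ) + 1 : ℕ) : ℝ) = ((i : ℕ) : ℝ) + 1 := by push_cast; ring
    rw [hc] at h
    linarith
  have htop : ∀ q : ii n,
      A (bas (.inl (⟨n - 1, by omega⟩ : Fin n))) (bas q) +
        ∑ m : Fin n, A (bas (.inr m)) (bas q) = 0 := by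
    intro q
    have h := hE n hn (by omega) (bas q)
    rw [ehat_top hn, map_add, LinearMap.add_apply, map_sum, LinearMap.sum_apply] at h
    exact h
  have hclastl : ∀ j : Fin n, A (bas (.inr (⟨n - 1, by omega⟩ : Fin n))) (bas (.inr j)) = 0 :=
    fun j => by rw [hsym]; exact hCb _
  have hcsmall : ∀ i j : Fin n, (i : ℕ) + 1 < n → (j : ℕ) + 1 < n → i ≠ j →
      A (bas (.inr i)) (bas (.inr j)) = 0 := by
    intro i j hi hj hij
    have e1 := hrow i hi (Sum.inr j)
    have e2 := hrow j hj (Sum.inr i)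
    have e3 := hPJb i j
    have e4 := hsym (bas (Sum.inr i)) (bas (Sum.inr j))
    have hvne : ((j : ℕ) : ℝ) - ((i : ℕ) : ℝ) ≠ 0 := by
      have hne : (i : ℕ) ≠ (j : ℕ) := fun e => hij (Fin.ext e)
      intro hcon
      exact hne (by exact_mod_cast (by linarith : ((i : ℕ) : ℝ) = ((j : ℕ) : ℝ)))
    have key : (((j : ℕ) : ℝ) - ((i : ℕ) : ℝ)) * A (bas (.inr i)) (bas (.inr j)) = 0 := by
      linear_combination (-1 : ℝ) * e1 + e2 + e3 + (((j : ℕ) : ℝ) + 1) * e4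
    rcases mul_eq_zero.mp key with h' | h'
    · exact absurd h' hvne
    · exact h'
  have hcdiag : ∀ i : Fin n, A (bas (.inr i)) (bas (.inr i)) = 0 := by
    intro i
    by_cases hi : (i : ℕ) + 1 < n
    · have h := htop (Sum.inr i)
      have h1 : A (bas (.inl (⟨n - 1, by omega⟩ : Fin n))) (bas (.inr i)) = 0 := by
        rw [hPJb]; exact hCb _
      have h2 : ∑ m : Fin n, A (bas (.inr m)) (bas (.inr i)) =
          A (bas (.inr i)) (bas (.inr i)) := by
        rw [Finset.sum_eq_single i]
        · intro m _ hm
          by_cases hmn : (m : ℕ) + 1 < n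
          · exact hcsmall m i hmn hi hm
          · have hm' : m = (⟨n - 1, by omega⟩ : Fin n) := Fin.ext (by simp; have := m.2; omega)
            rw [hm']; exact hclastl i
        · simp
      rw [h1, h2] at h
      linarith
    · have hi' : i = (⟨n - 1, by omega⟩ : Fin n) := Fin.ext (by simp; have := i.2; omega)
      rw [hi']; exact hCb _
  have hcall : ∀ i j : Fin n, A (bas (.inr i)) (bas (.inr j)) = 0 := by
    intro i j
    by_cases hij : i = j
    · subst hij; exact hcdiag i
    · by_cases hi : (i : ℕ) + 1 < n
      · by_cases hj : (j : ℕ) + 1 < n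
        · exact hcsmall i j hi hj hij
        · have hj' : j = (⟨n - 1, by omega⟩ : Fin n) := Fin.ext (by simp; have := j.2; omega)
          rw [hj']; exact hCb _
      · have hi' : i = (⟨n - 1, by omega⟩ : Fin n) := Fin.ext (by simp; have := i.2; omega)
        rw [hi']; exact hclastl j
  have hball : ∀ i j : Fin n, A (bas (.inl i)) (bas (.inr j)) = 0 := by
    intro i j
    by_cases hi : (i : ℕ) + 1 < n
    · rw [hrow i hi, hcall]; ring
    · have hi' : i = (⟨n - 1, by omega⟩ : Fin n) := Fin.ext (by simp; have := i.2; omega)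
      rw [hi', hPJb]; exact hCb _
  have haall : ∀ i j : Fin n, A (bas (.inl i)) (bas (.inl j)) = 0 := by
    intro i j
    by_cases hi : (i : ℕ) + 1 < n
    · rw [hrow i hi]
      have h0 : A (bas (.inr i)) (bas (.inl j)) = 0 := by rw [hsym]; exact hball j i
      rw [h0]; ring
    · have hi' : i = (⟨n - 1, by omega⟩ : Fin n) := Fin.ext (by simp; have := i.2; omega)
      by_cases hj : (j : ℕ) + 1 < n
      · rw [hsym, hrow j hj]
        have h0 : A (bas (.inr j)) (bas (.inl i)) = 0 := by rw [hsym]; exact hball i j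
        rw [h0]; ring
      · have hj' : j = (⟨n - 1, by omega⟩ : Fin n) := Fin.ext (by simp; have := j.2; omega)
        have h := htop (Sum.inl (⟨n - 1, by omega⟩ : Fin n))
        have h2 : ∑ m : Fin n, A (bas (.inr m)) (bas (.inl (⟨n - 1, by omega⟩ : Fin n))) = 0 :=
          Finset.sum_eq_zero fun m _ => by rw [hsym]; exact hball _ m
        rw [h2] at h
        rw [hi', hj']
        linarith
  have hA : A = Bmk (fun p q => A (bas p) (bas q)) := bil_eq_Bmk A
  have hz : (fun p q => A (bas p) (bas q)) = fun _ _ : ii n => (0 : ℝ) := by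
    funext p q
    cases p with
    | inl i =>
      cases q with
      | inl j => exact haall i j
      | inr j => exact hball i j
    | inr i =>
      cases q with
      | inl j => rw [hsym]; exact hball j i
      | inr j => exact hcall i j
  rw [hA, hz]
  refine LinearMap.ext fun X => LinearMap.ext fun Y => ?_
  rw [Bmk_apply]
  simp

end SymP2

namespace SymP2
open Finset

variable {n : ℕ}

def srt (t : Fin n × Fin n × Fin n) : Fin n × Fin n × Fin n :=
  if t.1 ≤ t.2.1 then
    (if t.2.1 ≤ t.2.2 then t
     else if t.1 ≤ t.2.2 then (t.1, t.2.2, t.2.1)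
     else (t.2.2, t.1, t.2.1))
  else
    (if t.1 ≤ t.2.2 then (t.2.1, t.1, t.2.2)
     else if t.2.1 ≤ t.2.2 then (t.2.1, t.2.2, t.1)
     else (t.2.2, t.2.1, t.1))

lemma srt_sorted (t : Fin n × Fin n × Fin n) :
    (srt t).1 ≤ (srt t).2.1 ∧ (srt t).2.1 ≤ (srt t).2.2 := by
  obtain ⟨i, j, k⟩ := t
  unfold srt
  dsimp only
  split_ifs <;> refine ⟨?_, ?_⟩ <;> simp only [Fin.le_def, not_le, Fin.lt_def] at * <;> omega

lemma srt_swap12 (i j k : Fin n) : srt (i, j, k) = srt (j, i, k) := by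
  unfold srt
  dsimp only
  split_ifs <;>
    (simp only [Prod.mk.injEq, Fin.ext_iff, Fin.le_def, not_le, Fin.lt_def, and_true,
      true_and] at * <;> omega)

lemma srt_swap23 (i j k : Fin n) : srt (i, j, k) = srt (i, k, j) := by
  unfold srt
  dsimp only
  split_ifs <;>
    (simp only [Prod.mk.injEq, Fin.ext_iff, Fin.le_def, not_le, Fin.lt_def, and_true,
      true_and] at * <;> omega)

lemma srt_id (i j k : Fin n) (h1 : i ≤ j) (h2 : j ≤ k) : srt (i, j, k) = (i, j, k) := by
  unfold srt
  dsimp only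
  rw [if_pos h1, if_pos h2]

lemma srt_le3 (i j k : Fin n) : (k : ℕ) ≤ ((srt (i, j, k)).2.2 : ℕ) := by
  unfold srt
  dsimp only
  split_ifs <;> simp only [Fin.le_def, not_le, Fin.lt_def] at * <;> omega

lemma symm_srt {α : Type*} (G : Fin n → Fin n → Fin n → α)
    (h12 : ∀ a b c, G a b c = G b a c) (h23 : ∀ a b c, G a b c = G a c b) (i j k : Fin n) :
    G i j k = G (srt (i, j, k)).1 (srt (i, j, k)).2.1 (srt (i, j, k)).2.2 := by
  unfold srt
  dsimp only
  split_ifs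
  · rfl
  · exact h23 i j k
  · rw [h23, h12]
  · exact h12 i j k
  · rw [h12, h23]
  · rw [h23, h12, h23]

def TS (n : ℕ) := {t : Fin n × Fin n × Fin n // t.1 ≤ t.2.1 ∧ t.2.1 ≤ t.2.2}
def TSm (n : ℕ) :=
  {t : Fin n × Fin n × Fin n // (t.1 ≤ t.2.1 ∧ t.2.1 ≤ t.2.2) ∧ (t.2.2 : ℕ) + 1 < n}

instance (n : ℕ) : Fintype (TS n) := by unfold TS; infer_instance
instance (n : ℕ) : Fintype (TSm n) := by unfold TSm; infer_instance

abbrev TIdx (n : ℕ) := TS n ⊕ (TSm n ⊕ (TSm n ⊕ TSm n))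

def aTv (y : TIdx n → ℝ) (s : Fin n × Fin n × Fin n) : ℝ :=
  if h : s.1 ≤ s.2.1 ∧ s.2.1 ≤ s.2.2 then y (.inl ⟨s, h⟩) else 0

def aT (y : TIdx n → ℝ) : Fin n → Fin n → Fin n → ℝ := fun i j k => aTv y (srt (i, j, k))

def mTv (y : TIdx n → ℝ) (sel : TSm n → TIdx n) (s : Fin n × Fin n × Fin n) : ℝ :=
  if h : (s.1 ≤ s.2.1 ∧ s.2.1 ≤ s.2.2) ∧ (s.2.2 : ℕ) + 1 < n then y (sel ⟨s, h⟩) else 0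

def mT (y : TIdx n → ℝ) (sel : TSm n → TIdx n) : Fin n → Fin n → Fin n → ℝ :=
  fun i j k => mTv y sel (srt (i, j, k))

def bT (y : TIdx n → ℝ) := mT y (fun s => .inr (.inl s))
def cT (y : TIdx n → ℝ) := mT y (fun s => .inr (.inr (.inl s)))
def dT (y : TIdx n → ℝ) := mT y (fun s => .inr (.inr (.inr s)))

lemma aT_sw12 (y : TIdx n → ℝ) (i j k : Fin n) : aT y i j k = aT y j i k :=
  congrArg (aTv y) (srt_swap12 i j k)
lemma aT_sw23 (y : TIdx n → ℝ) (i j k : Fin n) : aT y i j k = aT y i k j :=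
  congrArg (aTv y) (srt_swap23 i j k)
lemma mT_sw12 (y : TIdx n → ℝ) (sel) (i j k : Fin n) : mT y sel i j k = mT y sel j i k :=
  congrArg (mTv y sel) (srt_swap12 i j k)
lemma mT_sw23 (y : TIdx n → ℝ) (sel) (i j k : Fin n) : mT y sel i j k = mT y sel i k j :=
  congrArg (mTv y sel) (srt_swap23 i j k)

lemma aT_sorted (y : TIdx n → ℝ) (i j k : Fin n) (h1 : i ≤ j) (h2 : j ≤ k) :
    aT y i j k = y (.inl ⟨(i, j, k), ⟨h1, h2⟩⟩) := by
  unfold aT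
  rw [srt_id i j k h1 h2]
  unfold aTv
  rw [dif_pos ⟨h1, h2⟩]

lemma mT_sorted (y : TIdx n → ℝ) (sel) (i j k : Fin n) (h1 : i ≤ j) (h2 : j ≤ k)
    (h3 : (k : ℕ) + 1 < n) :
    mT y sel i j k = y (sel ⟨(i, j, k), ⟨⟨h1, h2⟩, h3⟩⟩) := by
  unfold mT
  rw [srt_id i j k h1 h2]
  unfold mTv
  rw [dif_pos ⟨⟨h1, h2⟩, h3⟩]

lemma mT_last (y : TIdx n → ℝ) (sel) (i j k : Fin n) (hk : (k : ℕ) + 1 = n) :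
    mT y sel i j k = 0 := by
  unfold mT mTv
  rw [dif_neg]
  rintro ⟨-, h⟩
  have := srt_le3 i j k
  omega

def Nent (y : TIdx n → ℝ) : ii n → ii n → ii n → ℝ
  | .inl i, .inl j, .inl k => aT y i j k
  | .inl i, .inl j, .inr k => bT y i j k
  | .inl i, .inr j, .inl k => bT y i j k
  | .inr i, .inl j, .inl k => bT y i j k
  | .inl i, .inr j, .inr k => cT y i j k
  | .inr i, .inl j, .inr k => cT y i j k
  | .inr i, .inr j, .inl k => cT y i j k
  | .inr i, .inr j, .inr k => dT y i j k

lemma Nent_sym12 (y : TIdx n → ℝ) (p q r : ii n) : Nent y p q r = Nent y q p r := by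
  cases p <;> cases q <;> cases r <;> simp only [Nent] <;>
    first
      | exact aT_sw12 y _ _ _
      | exact mT_sw12 y _ _ _ _

lemma Nent_sym23 (y : TIdx n → ℝ) (p q r : ii n) : Nent y p q r = Nent y p r q := by
  cases p <;> cases q <;> cases r <;> simp only [Nent] <;>
    first
      | exact aT_sw23 y _ _ _
      | exact mT_sw23 y _ _ _ _

lemma Tmk_sym12 (N : ii n → ii n → ii n → ℝ) (h : ∀ p q r, N p q r = N q p r) (X Y Z : V n) :
    Tmk N X Y Z = Tmk N Y X Z := by
  unfold Tmk
  rw [Finset.sum_comm]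
  refine Finset.sum_congr rfl fun p _ => Finset.sum_congr rfl fun q _ =>
    Finset.sum_congr rfl fun r _ => ?_
  rw [h]; ring

lemma Tmk_sym23 (N : ii n → ii n → ii n → ℝ) (h : ∀ p q r, N p q r = N p r q) (X Y Z : V n) :
    Tmk N X Y Z = Tmk N X Z Y := by
  unfold Tmk
  refine Finset.sum_congr rfl fun p _ => ?_
  rw [Finset.sum_comm]
  refine Finset.sum_congr rfl fun q _ => Finset.sum_congr rfl fun r _ => ?_
  rw [h]; ring

lemma Tmk_bas3 (N : ii n → ii n → ii n → ℝ) (X Y : V n) (r : ii n) :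
    Tmk N X Y (bas r) = ∑ p : ii n, ∑ q : ii n, N p q r * cf p X * cf q Y := by
  unfold Tmk
  refine Finset.sum_congr rfl fun p _ => Finset.sum_congr rfl fun q _ => ?_
  rw [Finset.sum_eq_single r]
  · rw [cf_bas, if_pos rfl]; ring
  · intro b _ hb; rw [cf_bas, if_neg hb]; ring
  · simp

lemma Tmk_mem_g3 (hn : 1 ≤ n) (y : TIdx n → ℝ) : Tmk (Nent y) ∈ g3P2 n := by
  refine ⟨Tmk_isTrilin _, fun X Y Z => Tmk_sym12 _ (Nent_sym12 y) X Y Z,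
    fun X Y Z => Tmk_sym23 _ (Nent_sym23 y) X Y Z, fun X Y => ?_, fun X Y Z => ?_⟩
  · rw [Cvec_eq hn, Tmk_bas3]
    refine Finset.sum_eq_zero fun p _ => Finset.sum_eq_zero fun q _ => ?_
    have h0 : Nent y p q (Sum.inr (⟨n - 1, by omega⟩ : Fin n)) = 0 := by
      cases p <;> cases q <;> simp only [Nent] <;>
        exact mT_last y _ _ _ _ (by simp; omega)
    rw [h0]; ring
  · unfold Tmk
    refine Finset.sum_congr rfl fun p _ => ?_
    simp only [Fintype.sum_sum_type, cf_Ph_inl, cf_Ph_inr, cf_J_inl, cf_J_inr,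
      mul_zero, zero_mul, Finset.sum_const_zero, add_zero, zero_add]
    rw [Finset.sum_comm]
    refine Finset.sum_congr rfl fun a _ => Finset.sum_congr rfl fun b _ => ?_
    have hb : Nent y p (.inl b) (.inr a) = Nent y p (.inl a) (.inr b) := by
      cases p <;> simp only [Nent] <;> exact mT_sw23 y _ _ _ _
    rw [hb]; ring

def readout3 (n : ℕ) (A : V n → V n → V n → ℝ) : TIdx n → ℝ
  | .inl t => A (bas (.inl t.1.1)) (bas (.inl t.1.2.1)) (bas (.inl t.1.2.2))
  | .inr (.inl t) => A (bas (.inl t.1.1)) (bas (.inl t.1.2.1)) (bas (.inr t.1.2.2))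
  | .inr (.inr (.inl t)) => A (bas (.inl t.1.1)) (bas (.inr t.1.2.1)) (bas (.inr t.1.2.2))
  | .inr (.inr (.inr t)) => A (bas (.inr t.1.1)) (bas (.inr t.1.2.1)) (bas (.inr t.1.2.2))

lemma ent3_eq (hn : 1 ≤ n) {A : V n → V n → V n → ℝ} (hA : A ∈ g3P2 n) :
    ∀ p q r, Nent (readout3 n A) p q r = A (bas p) (bas q) (bas r) := by
  obtain ⟨hT, h12, h23, hC, hPJ⟩ := hA
  have hCb : ∀ X Y, A X Y (bas (Sum.inr (⟨n - 1, by omega⟩ : Fin n))) = 0 := by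
    intro X Y
    have h := hC X Y
    rwa [Cvec_eq hn] at h
  have hPJb : ∀ (p : ii n) (j k : Fin n),
      A (bas p) (bas (.inl j)) (bas (.inr k)) = A (bas p) (bas (.inl k)) (bas (.inr j)) :=
    fun p j k => hPJ (bas p) (bas (.inl j)) (bas (.inl k))
  -- block functions
  set lst : Fin n := ⟨n - 1, by omega⟩ with hlstdef
  have hlast : ∀ m : Fin n, ¬ ((m : ℕ) + 1 < n) → m = lst :=
    fun m hm => Fin.ext (by simp [hlstdef]; have := m.2; omega)
  -- α block
  have haT : ∀ i j k : Fin n,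
      aT (readout3 n A) i j k = A (bas (.inl i)) (bas (.inl j)) (bas (.inl k)) := by
    intro i j k
    have hG := symm_srt (fun a b c => A (bas (.inl a)) (bas (.inl b)) (bas (.inl c)))
      (fun a b c => h12 _ _ _) (fun a b c => h23 _ _ _) i j k
    unfold aT aTv
    rw [dif_pos (srt_sorted (i, j, k))]
    exact hG.symm
  -- β block
  have hbsym12 : ∀ a b c : Fin n,
      A (bas (.inl a)) (bas (.inl b)) (bas (.inr c)) =
        A (bas (.inl b)) (bas (.inl a)) (bas (.inr c)) := fun a b c => h12 _ _ _
  have hbsym23 : ∀ a b c : Fin n,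
      A (bas (.inl a)) (bas (.inl b)) (bas (.inr c)) =
        A (bas (.inl a)) (bas (.inl c)) (bas (.inr b)) := fun a b c => hPJb _ b c
  have hbT : ∀ i j k : Fin n,
      bT (readout3 n A) i j k = A (bas (.inl i)) (bas (.inl j)) (bas (.inr k)) := by
    intro i j k
    have hG := symm_srt (fun a b c => A (bas (.inl a)) (bas (.inl b)) (bas (.inr c)))
      hbsym12 hbsym23 i j k
    unfold bT mT mTv
    by_cases h : ((srt (i, j, k)).2.2 : ℕ) + 1 < n
    · rw [dif_pos ⟨srt_sorted (i, j, k), h⟩]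
      exact hG.symm
    · rw [dif_neg (by rintro ⟨-, hh⟩; exact h hh)]
      rw [hG, hlast _ h]
      exact (hCb _ _).symm
  -- γ block
  have hcsym23 : ∀ a b c : Fin n,
      A (bas (.inl a)) (bas (.inr b)) (bas (.inr c)) =
        A (bas (.inl a)) (bas (.inr c)) (bas (.inr b)) := fun a b c => h23 _ _ _
  have hcsym12 : ∀ a b c : Fin n,
      A (bas (.inl a)) (bas (.inr b)) (bas (.inr c)) =
        A (bas (.inl b)) (bas (.inr a)) (bas (.inr c)) := by
    intro a b c
    calc A (bas (.inl a)) (bas (.inr b)) (bas (.inr c))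
        = A (bas (.inl a)) (bas (.inr c)) (bas (.inr b)) := h23 _ _ _
      _ = A (bas (.inr c)) (bas (.inl a)) (bas (.inr b)) := h12 _ _ _
      _ = A (bas (.inr c)) (bas (.inl b)) (bas (.inr a)) := hPJb _ a b
      _ = A (bas (.inl b)) (bas (.inr c)) (bas (.inr a)) := (h12 _ _ _).symm
      _ = A (bas (.inl b)) (bas (.inr a)) (bas (.inr c)) := h23 _ _ _
  have hcT : ∀ i j k : Fin n,
      cT (readout3 n A) i j k = A (bas (.inl i)) (bas (.inr j)) (bas (.inr k)) := by
    intro i j k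
    have hG := symm_srt (fun a b c => A (bas (.inl a)) (bas (.inr b)) (bas (.inr c)))
      hcsym12 hcsym23 i j k
    unfold cT mT mTv
    by_cases h : ((srt (i, j, k)).2.2 : ℕ) + 1 < n
    · rw [dif_pos ⟨srt_sorted (i, j, k), h⟩]
      exact hG.symm
    · rw [dif_neg (by rintro ⟨-, hh⟩; exact h hh)]
      rw [hG, hlast _ h]
      exact (hCb _ _).symm
  -- δ block
  have hdT : ∀ i j k : Fin n,
      dT (readout3 n A) i j k = A (bas (.inr i)) (bas (.inr j)) (bas (.inr k)) := by
    intro i j k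
    have hG := symm_srt (fun a b c => A (bas (.inr a)) (bas (.inr b)) (bas (.inr c)))
      (fun a b c => h12 _ _ _) (fun a b c => h23 _ _ _) i j k
    unfold dT mT mTv
    by_cases h : ((srt (i, j, k)).2.2 : ℕ) + 1 < n
    · rw [dif_pos ⟨srt_sorted (i, j, k), h⟩]
      exact hG.symm
    · rw [dif_neg (by rintro ⟨-, hh⟩; exact h hh)]
      rw [hG, hlast _ h]
      exact (hCb _ _).symm
  intro p q r
  cases p with
  | inl i =>
    cases q with
    | inl j =>
      cases r with
      | inl k => exact haT i j k
      | inr k => exact hbT i j k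
    | inr j =>
      cases r with
      | inl k =>
        show bT (readout3 n A) i j k = _
        rw [hbT i j k]
        exact (hbsym23 i j k).trans (h23 _ _ _).symm
      | inr k => exact hcT i j k
  | inr i =>
    cases q with
    | inl j =>
      cases r with
      | inl k =>
        show bT (readout3 n A) i j k = _
        rw [hbT i j k]
        calc A (bas (.inl i)) (bas (.inl j)) (bas (.inr k))
            = A (bas (.inl j)) (bas (.inl i)) (bas (.inr k)) := hbsym12 i j k
          _ = A (bas (.inl j)) (bas (.inl k)) (bas (.inr i)) := hbsym23 j i k
          _ = A (bas (.inl j)) (bas (.inr i)) (bas (.inl k)) := (h23 _ _ _).symm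
          _ = A (bas (.inr i)) (bas (.inl j)) (bas (.inl k)) := (h12 _ _ _).symm
      | inr k =>
        show cT (readout3 n A) i j k = _
        rw [hcT i j k]
        calc A (bas (.inl i)) (bas (.inr j)) (bas (.inr k))
            = A (bas (.inl j)) (bas (.inr i)) (bas (.inr k)) := hcsym12 i j k
          _ = A (bas (.inr i)) (bas (.inl j)) (bas (.inr k)) := (h12 _ _ _).symm
    | inr j =>
      cases r with
      | inl k =>
        show cT (readout3 n A) i j k = _
        rw [hcT i j k]
        calc A (bas (.inl i)) (bas (.inr j)) (bas (.inr k))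
            = A (bas (.inl k)) (bas (.inr i)) (bas (.inr j)) := by
              rw [hcsym23 i j k, hcsym12 i k j]
          _ = A (bas (.inr i)) (bas (.inl k)) (bas (.inr j)) := (h12 _ _ _).symm
          _ = A (bas (.inr i)) (bas (.inr j)) (bas (.inl k)) := (h23 _ _ _).symm
      | inr k => exact hdT i j k

def Phig3 (n : ℕ) : g3P2 n →ₗ[ℝ] (TIdx n → ℝ) where
  toFun A := readout3 n (A : V n → V n → V n → ℝ)
  map_add' A B := by
    funext idx
    rcases idx with t | t | t | t <;> simp [readout3]
  map_smul' c A := by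
    funext idx
    rcases idx with t | t | t | t <;> simp [readout3]

lemma g3_equiv (hn : 1 ≤ n) : Nonempty ((g3P2 n) ≃ₗ[ℝ] (TIdx n → ℝ)) := by
  refine ⟨LinearEquiv.ofBijective (Phig3 n) ⟨?_, ?_⟩⟩
  · intro A B hAB
    have hTA := A.2.1
    have hTB := B.2.1
    have kA : (A : V n → V n → V n → ℝ) = Tmk (Nent (readout3 n (A : V n → V n → V n → ℝ))) := by
      have h2 : Nent (readout3 n (A : V n → V n → V n → ℝ)) =
          fun p q r => (A : V n → V n → V n → ℝ) (bas p) (bas q) (bas r) := by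
        funext p q r; exact ent3_eq hn A.2 p q r
      rw [h2]
      exact tri_eq_Tmk hTA
    have kB : (B : V n → V n → V n → ℝ) = Tmk (Nent (readout3 n (B : V n → V n → V n → ℝ))) := by
      have h2 : Nent (readout3 n (B : V n → V n → V n → ℝ)) =
          fun p q r => (B : V n → V n → V n → ℝ) (bas p) (bas q) (bas r) := by
        funext p q r; exact ent3_eq hn B.2 p q r
      rw [h2]
      exact tri_eq_Tmk hTB
    have hread : readout3 n (A : V n → V n → V n → ℝ) = readout3 n (B : V n → V n → V n → ℝ) :=
      hAB
    refine Subtype.ext ?_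
    rw [kA, kB, hread]
  · intro y
    refine ⟨⟨Tmk (Nent y), Tmk_mem_g3 hn y⟩, ?_⟩
    funext idx
    rcases idx with ⟨⟨i, j, k⟩, h⟩ | ⟨⟨i, j, k⟩, h⟩ | ⟨⟨i, j, k⟩, h⟩ | ⟨⟨i, j, k⟩, h⟩
    · show Tmk (Nent y) (bas (.inl i)) (bas (.inl j)) (bas (.inl k)) = _
      rw [Tmk_bas]
      exact aT_sorted y i j k h.1 h.2
    · show Tmk (Nent y) (bas (.inl i)) (bas (.inl j)) (bas (.inr k)) = _
      rw [Tmk_bas]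
      simp only [Nent]
      exact mT_sorted y _ i j k h.1.1 h.1.2 h.2
    · show Tmk (Nent y) (bas (.inl i)) (bas (.inr j)) (bas (.inr k)) = _
      rw [Tmk_bas]
      simp only [Nent]
      exact mT_sorted y _ i j k h.1.1 h.1.2 h.2
    · show Tmk (Nent y) (bas (.inr i)) (bas (.inr j)) (bas (.inr k)) = _
      rw [Tmk_bas]
      simp only [Nent]
      exact mT_sorted y _ i j k h.1.1 h.1.2 h.2

lemma g3_finrank (hn : 1 ≤ n) :
    Module.finrank ℝ (g3P2 n) = Fintype.card (TS n) + 3 * Fintype.card (TSm n) := by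
  obtain ⟨e⟩ := g3_equiv hn
  rw [e.finrank_eq, Module.finrank_fintype_fun_eq_card, Fintype.card_sum, Fintype.card_sum,
    Fintype.card_sum]
  ring

end SymP2

namespace SymP2
open Finset

variable {n : ℕ}

def Tn (m : ℕ) : ℕ := ∑ i ∈ Finset.range m, (i + 1)
def STn (m : ℕ) : ℕ := ∑ i ∈ Finset.range m, Tn (i + 1)

lemma card_interval (a b : ℕ) (hb : b ≤ n) :
    Fintype.card {j : Fin n // a ≤ (j : ℕ) ∧ (j : ℕ) < b} = b - a := by
  have e : {j : Fin n // a ≤ (j : ℕ) ∧ (j : ℕ) < b} ≃ Fin (b - a) :=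
    { toFun := fun j => ⟨(j.1 : ℕ) - a, by obtain ⟨h1, h2⟩ := j.2; omega⟩
      invFun := fun m => ⟨⟨a + m.1, by have := m.2; omega⟩, by have := m.2; simp; omega⟩
      left_inv := fun j => Subtype.ext (Fin.ext (by obtain ⟨h1, h2⟩ := j.2; simp; omega))
      right_inv := fun m => Fin.ext (by simp) }
  rw [Fintype.card_congr e, Fintype.card_fin]

lemma card_le_from (i : Fin n) :
    Fintype.card {j : Fin n // i ≤ j} = n - (i : ℕ) := by
  have e : {j : Fin n // i ≤ j} ≃ {j : Fin n // (i : ℕ) ≤ (j : ℕ) ∧ (j : ℕ) < n} :=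
    Equiv.subtypeEquivRight (fun j => by
      constructor
      · intro h; exact ⟨Fin.le_def.mp h, j.2⟩
      · intro h; exact Fin.le_def.mpr h.1)
  rw [Fintype.card_congr e, card_interval _ _ le_rfl]

lemma card_le_from' (i : Fin n) :
    Fintype.card {j : Fin n // i ≤ j ∧ (j : ℕ) + 1 < n} = n - 1 - (i : ℕ) := by
  have e : {j : Fin n // i ≤ j ∧ (j : ℕ) + 1 < n} ≃
      {j : Fin n // (i : ℕ) ≤ (j : ℕ) ∧ (j : ℕ) < n - 1} :=
    Equiv.subtypeEquivRight (fun j => by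
      constructor
      · intro h; exact ⟨Fin.le_def.mp h.1, by omega⟩
      · intro h; exact ⟨Fin.le_def.mpr h.1, by omega⟩)
  rw [Fintype.card_congr e, card_interval _ _ (by omega)]

lemma sum_if_tail (k : ℕ) (hk : k ≤ n) (f : ℕ → ℕ) :
    ∑ i ∈ Finset.range n, (if k ≤ i then f i else 0) = ∑ i ∈ Finset.Ico k n, f i := by
  rw [Finset.range_eq_Ico, ← Finset.sum_Ico_consecutive _ (Nat.zero_le k) hk]
  have h1 : ∑ i ∈ Finset.Ico 0 k, (if k ≤ i then f i else 0) = 0 :=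
    Finset.sum_eq_zero fun i hi => by
      rw [Finset.mem_Ico] at hi
      rw [if_neg (by omega)]
  have h2 : ∑ i ∈ Finset.Ico k n, (if k ≤ i then f i else 0) = ∑ i ∈ Finset.Ico k n, f i :=
    Finset.sum_congr rfl fun i hi => by
      rw [Finset.mem_Ico] at hi
      rw [if_pos hi.1]
  rw [h1, h2, zero_add]

lemma sum_sub_eq_Tn (k : ℕ) (hk : k ≤ n) :
    ∑ i ∈ Finset.Ico k n, (n - i) = Tn (n - k) := by
  rw [Finset.sum_Ico_eq_sum_range]
  have h1 : ∀ i ∈ Finset.range (n - k), n - (k + i) = (n - k) - 1 - i + 1 := by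
    intro i hi
    rw [Finset.mem_range] at hi
    omega
  rw [Finset.sum_congr rfl h1, Finset.sum_range_reflect (fun i => i + 1) (n - k)]
  rfl

lemma sum_range_id_eq_Tn (m : ℕ) : ∑ i ∈ Finset.range m, i = Tn (m - 1) := by
  cases m with
  | zero => rfl
  | succ m =>
    rw [Finset.sum_range_succ' (fun i => i) m]
    simp [Tn]

lemma sum_sub_eq_Tn' (k : ℕ) (hk : k ≤ n) :
    ∑ i ∈ Finset.Ico k n, (n - 1 - i) = Tn (n - 1 - k) := by
  rw [Finset.sum_Ico_eq_sum_range]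
  have h1 : ∀ i ∈ Finset.range (n - k), n - 1 - (k + i) = (n - k) - 1 - i := by
    intro i hi; rw [Finset.mem_range] at hi; omega
  rw [Finset.sum_congr rfl h1, Finset.sum_range_reflect (fun i => i) (n - k),
    sum_range_id_eq_Tn]
  congr 1
  omega

lemma cardFA (k : ℕ) (hk : k ≤ n) : Fintype.card (FA n k) = Tn (n - k) := by
  have e : FA n k ≃ Σ i : Fin n, {j : Fin n // k ≤ (i : ℕ) ∧ i ≤ j} :=
    { toFun := fun x => ⟨x.1.1, x.1.2, x.2⟩
      invFun := fun s => ⟨(s.1, s.2.1), s.2.2⟩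
      left_inv := fun x => rfl
      right_inv := fun s => rfl }
  rw [Fintype.card_congr e, Fintype.card_sigma]
  have h1 : ∀ i : Fin n, Fintype.card {j : Fin n // k ≤ (i : ℕ) ∧ i ≤ j} =
      if k ≤ (i : ℕ) then n - (i : ℕ) else 0 := by
    intro i
    by_cases hki : k ≤ (i : ℕ)
    · rw [if_pos hki, ← card_le_from i]
      exact Fintype.card_congr (Equiv.subtypeEquivRight (fun j => by tauto))
    · rw [if_neg hki]
      exact Fintype.card_eq_zero_iff.mpr ⟨fun j => hki j.2.1⟩
  rw [Finset.sum_congr rfl (fun i _ => h1 i),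
    Fin.sum_univ_eq_sum_range (fun i => if k ≤ i then n - i else 0) n,
    sum_if_tail k hk, sum_sub_eq_Tn k hk]

lemma cardFB (k : ℕ) (hk : k ≤ n) : Fintype.card (FB n k) = Tn (n - 1 - k) := by
  have e : FB n k ≃ Σ i : Fin n, {j : Fin n // k ≤ (i : ℕ) ∧ (i ≤ j ∧ (j : ℕ) + 1 < n)} :=
    { toFun := fun x => ⟨x.1.1, x.1.2, ⟨x.2.1, x.2.2⟩⟩
      invFun := fun s => ⟨(s.1, s.2.1), ⟨s.2.2.1, s.2.2.2⟩⟩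
      left_inv := fun x => rfl
      right_inv := fun s => rfl }
  rw [Fintype.card_congr e, Fintype.card_sigma]
  have h1 : ∀ i : Fin n, Fintype.card {j : Fin n // k ≤ (i : ℕ) ∧ (i ≤ j ∧ (j : ℕ) + 1 < n)} =
      if k ≤ (i : ℕ) then n - 1 - (i : ℕ) else 0 := by
    intro i
    by_cases hki : k ≤ (i : ℕ)
    · rw [if_pos hki, ← card_le_from' i]
      exact Fintype.card_congr (Equiv.subtypeEquivRight (fun j => by tauto))
    · rw [if_neg hki]
      exact Fintype.card_eq_zero_iff.mpr ⟨fun j => hki j.2.1⟩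
  rw [Finset.sum_congr rfl (fun i _ => h1 i),
    Fin.sum_univ_eq_sum_range (fun i => if k ≤ i then n - 1 - i else 0) n,
    sum_if_tail k hk, sum_sub_eq_Tn' k hk]

lemma cardFC (k : ℕ) (hn : 1 ≤ n) (hk : k ≤ n - 1) :
    Fintype.card (FC n k) = k + ∑ j ∈ Finset.Ico k (n - 1), (j + 1) := by
  have e : FC n k ≃ Σ j : Fin n,
      {i : Fin n // i ≤ j ∧ (j : ℕ) + 1 < n ∧ ((j : ℕ) < k → i = j)} :=
    { toFun := fun x => ⟨x.1.2, x.1.1, x.2⟩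
      invFun := fun s => ⟨(s.2.1, s.1), s.2.2⟩
      left_inv := fun x => rfl
      right_inv := fun s => rfl }
  rw [Fintype.card_congr e, Fintype.card_sigma]
  have h1 : ∀ j : Fin n,
      Fintype.card {i : Fin n // i ≤ j ∧ (j : ℕ) + 1 < n ∧ ((j : ℕ) < k → i = j)} =
      if (j : ℕ) + 1 < n then (if (j : ℕ) < k then 1 else (j : ℕ) + 1) else 0 := by
    intro j
    by_cases hj : (j : ℕ) + 1 < n
    · rw [if_pos hj]
      by_cases hjk : (j : ℕ) < k
      · rw [if_pos hjk]
        have e2 : {i : Fin n // i ≤ j ∧ (j : ℕ) + 1 < n ∧ ((j : ℕ) < k → i = j)} ≃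
            {i : Fin n // i = j} :=
          Equiv.subtypeEquivRight (fun i => by
            constructor
            · intro h; exact h.2.2 hjk
            · intro h; subst h; exact ⟨le_rfl, hj, fun _ => rfl⟩)
        rw [Fintype.card_congr e2, Fintype.card_subtype_eq]
      · rw [if_neg hjk]
        have e2 : {i : Fin n // i ≤ j ∧ (j : ℕ) + 1 < n ∧ ((j : ℕ) < k → i = j)} ≃
            {i : Fin n // 0 ≤ (i : ℕ) ∧ (i : ℕ) < (j : ℕ) + 1} :=
          Equiv.subtypeEquivRight (fun i => by
            constructor
            · intro h; exact ⟨Nat.zero_le _, by have := Fin.le_def.mp h.1; omega⟩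
            · intro h; exact ⟨Fin.le_def.mpr (by omega), hj, fun hc => absurd hc hjk⟩)
        rw [Fintype.card_congr e2, card_interval 0 ((j : ℕ) + 1) (by omega)]
        omega
    · rw [if_neg hj]
      exact Fintype.card_eq_zero_iff.mpr ⟨fun i => hj i.2.2.1⟩
  rw [Finset.sum_congr rfl (fun j _ => h1 j),
    Fin.sum_univ_eq_sum_range
      (fun j => if j + 1 < n then (if j < k then 1 else j + 1) else 0) n]
  have hsplit : n = (n - 1) + 1 := by omega
  rw [hsplit, Finset.sum_range_succ]
  rw [if_neg (by omega)]
  have h2 : ∀ j ∈ Finset.range (n - 1),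
      (if j + 1 < (n - 1) + 1 then (if j < k then 1 else j + 1) else 0) =
        (if j < k then 1 else j + 1) := by
    intro j hj
    rw [Finset.mem_range] at hj
    rw [if_pos (by omega)]
  rw [Finset.sum_congr rfl h2, add_zero, Finset.range_eq_Ico,
    ← Finset.sum_Ico_consecutive _ (Nat.zero_le k) (by omega : k ≤ n - 1)]
  have h3 : ∑ j ∈ Finset.Ico 0 k, (if j < k then 1 else j + 1) = k := by
    have hc : ∀ j ∈ Finset.Ico 0 k, (if j < k then 1 else j + 1) = 1 := fun j hj => by
      rw [Finset.mem_Ico] at hj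
      rw [if_pos hj.2]
    rw [Finset.sum_congr rfl hc]
    simp
  have h4 : ∑ j ∈ Finset.Ico k (n - 1), (if j < k then 1 else j + 1) =
      ∑ j ∈ Finset.Ico k (n - 1), (j + 1) :=
    Finset.sum_congr rfl (fun j hj => by
      rw [Finset.mem_Ico] at hj
      rw [if_neg (by omega)])
  rw [h3, h4]
  simp

lemma cardTS : Fintype.card (TS n) = STn n := by
  have e : TS n ≃ Σ i : Fin n, {p : Fin n × Fin n // (i : ℕ) ≤ (p.1 : ℕ) ∧ p.1 ≤ p.2} :=
    { toFun := fun x => ⟨x.1.1, x.1.2, ⟨Fin.le_def.mp x.2.1, x.2.2⟩⟩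
      invFun := fun s => ⟨(s.1, s.2.1), ⟨Fin.le_def.mpr s.2.2.1, s.2.2.2⟩⟩
      left_inv := fun x => rfl
      right_inv := fun s => Sigma.ext rfl (by simp) }
  rw [Fintype.card_congr e, Fintype.card_sigma]
  have h1 : ∀ i : Fin n,
      Fintype.card {p : Fin n × Fin n // (i : ℕ) ≤ (p.1 : ℕ) ∧ p.1 ≤ p.2} = Tn (n - (i : ℕ)) :=
    fun i => cardFA (i : ℕ) (by omega)
  rw [Finset.sum_congr rfl (fun i _ => h1 i),
    Fin.sum_univ_eq_sum_range (fun i => Tn (n - i)) n]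
  have h2 : ∀ i ∈ Finset.range n, Tn (n - i) = Tn ((n - 1 - i) + 1) := by
    intro i hi; rw [Finset.mem_range] at hi; congr 1; omega
  rw [Finset.sum_congr rfl h2, Finset.sum_range_reflect (fun i => Tn (i + 1)) n]
  rfl

lemma sum_Tn_shift (m : ℕ) : ∑ j ∈ Finset.range m, Tn j = STn (m - 1) := by
  cases m with
  | zero => rfl
  | succ m =>
    rw [Finset.sum_range_succ' (fun j => Tn j) m]
    simp [STn, Tn]

lemma cardTSm (hn : 1 ≤ n) : Fintype.card (TSm n) = STn (n - 1) := by
  have e : TSm n ≃ Σ i : Fin n,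
      {p : Fin n × Fin n // (i : ℕ) ≤ (p.1 : ℕ) ∧ (p.1 ≤ p.2 ∧ (p.2 : ℕ) + 1 < n)} :=
    { toFun := fun x => ⟨x.1.1, x.1.2, ⟨Fin.le_def.mp x.2.1.1, x.2.1.2, x.2.2⟩⟩
      invFun := fun s => ⟨(s.1, s.2.1), ⟨⟨Fin.le_def.mpr s.2.2.1, s.2.2.2.1⟩, s.2.2.2.2⟩⟩
      left_inv := fun x => rfl
      right_inv := fun s => Sigma.ext rfl (by simp) }
  rw [Fintype.card_congr e, Fintype.card_sigma]
  have h1 : ∀ i : Fin n,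
      Fintype.card {p : Fin n × Fin n // (i : ℕ) ≤ (p.1 : ℕ) ∧ (p.1 ≤ p.2 ∧ (p.2 : ℕ) + 1 < n)} =
        Tn (n - 1 - (i : ℕ)) := by
    intro i
    rw [← cardFB (i : ℕ) (by omega)]
    exact Fintype.card_congr (Equiv.subtypeEquivRight (fun p => by tauto))
  rw [Finset.sum_congr rfl (fun i _ => h1 i),
    Fin.sum_univ_eq_sum_range (fun i => Tn (n - 1 - i)) n]
  have h2 : ∀ i ∈ Finset.range n, Tn (n - 1 - i) = (fun j => Tn j) (n - 1 - i) := fun _ _ => rfl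
  rw [Finset.sum_congr rfl h2, Finset.sum_range_reflect (fun j => Tn j) n, sum_Tn_shift]

end SymP2

namespace SymP2
open Finset

variable {n : ℕ}

lemma Tn_succ (m : ℕ) : Tn (m + 1) = Tn m + (m + 1) := Finset.sum_range_succ _ m
lemma STn_succ (m : ℕ) : STn (m + 1) = STn m + Tn (m + 1) := Finset.sum_range_succ _ m

lemma Tn_closed (m : ℕ) : 2 * Tn m = m * (m + 1) := by
  induction m with
  | zero => rfl
  | succ m ih =>
    rw [Tn_succ, Nat.mul_add, ih]
    ring

lemma sumP1 (hn : 1 ≤ n) : ∑ k ∈ Finset.Ico 1 n, Tn (n - k) = STn (n - 1) := by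
  rw [Finset.sum_Ico_eq_sum_range]
  have h : ∀ i ∈ Finset.range (n - 1), Tn (n - (1 + i)) = Tn (((n - 1) - 1 - i) + 1) := by
    intro i hi; rw [Finset.mem_range] at hi; congr 1; omega
  rw [Finset.sum_congr rfl h, Finset.sum_range_reflect (fun i => Tn (i + 1)) (n - 1)]
  all_goals rfl

lemma sumP2 (hn : 1 ≤ n) : ∑ k ∈ Finset.Ico 1 n, Tn (n - 1 - k) = STn (n - 2) := by
  rw [Finset.sum_Ico_eq_sum_range]
  have h : ∀ i ∈ Finset.range (n - 1), Tn (n - 1 - (1 + i)) = Tn ((n - 1) - 1 - i) := by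
    intro i hi; rw [Finset.mem_range] at hi; congr 1; omega
  rw [Finset.sum_congr rfl h, Finset.sum_range_reflect (fun j => Tn j) (n - 1), sum_Tn_shift]
  all_goals (congr 1 <;> omega)

lemma sumP3 (hn : 1 ≤ n) : ∑ k ∈ Finset.Ico 1 n, k = Tn (n - 1) := by
  rw [Finset.sum_Ico_eq_sum_range]
  have h : ∀ i ∈ Finset.range (n - 1), 1 + i = i + 1 := by intro i _; omega
  rw [Finset.sum_congr rfl h]
  all_goals rfl

lemma sumQ (hn2 : 2 ≤ n) :
    ∑ k ∈ Finset.Ico 1 n, (∑ j ∈ Finset.Ico k (n - 1), (j + 1)) = 2 * STn (n - 2) := by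
  rw [← Finset.sum_Ico_consecutive _ (show 1 ≤ n - 1 by omega) (show n - 1 ≤ n by omega)]
  have hlast : ∑ k ∈ Finset.Ico (n - 1) n, (∑ j ∈ Finset.Ico k (n - 1), (j + 1)) = 0 := by
    refine Finset.sum_eq_zero fun k hk => ?_
    rw [Finset.mem_Ico] at hk
    have : Finset.Ico k (n - 1) = ∅ := Finset.Ico_eq_empty (by omega)
    rw [this, Finset.sum_empty]
  rw [hlast, add_zero, Finset.sum_Ico_Ico_comm]
  have h1 : ∀ j ∈ Finset.Ico 1 (n - 1), (∑ _k ∈ Finset.Ico 1 (j + 1), (j + 1)) = j * (j + 1) := by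
    intro j hj
    rw [Finset.sum_const, Nat.card_Ico, smul_eq_mul]
    have hj1 : j + 1 - 1 = j := by omega
    rw [hj1]
  rw [Finset.sum_congr rfl h1]
  have h2 : ∑ j ∈ Finset.Ico 0 (n - 1), j * (j + 1) = ∑ j ∈ Finset.Ico 1 (n - 1), j * (j + 1) := by
    rw [← Finset.sum_Ico_consecutive _ (Nat.zero_le 1) (show 1 ≤ n - 1 by omega)]
    simp
  rw [← h2, ← Finset.range_eq_Ico]
  have h3 : ∀ j ∈ Finset.range (n - 1), j * (j + 1) = 2 * Tn j := by
    intro j _; rw [Tn_closed]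
  rw [Finset.sum_congr rfl h3, ← Finset.mul_sum, sum_Tn_shift]
  have hq : n - 1 - 1 = n - 2 := by omega
  rw [hq]

lemma main_arith (hn : 1 ≤ n) :
    STn n + 3 * STn (n - 1) =
      (Tn n + (Tn (n - 1) + Tn (n - 1))) +
        ∑ k ∈ Finset.Icc 1 (2 * n),
          (if k ≤ n - 1 then
            Tn (n - k) + Tn (n - 1 - k) + (k + ∑ j ∈ Finset.Ico k (n - 1), (j + 1))
          else 0) := by
  by_cases h1 : n = 1
  · subst h1
    have hz : ∑ k ∈ Finset.Icc 1 (2 * 1),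
        (if k ≤ 1 - 1 then
          Tn (1 - k) + Tn (1 - 1 - k) + (k + ∑ j ∈ Finset.Ico k (1 - 1), (j + 1))
        else 0) = 0 := by
      refine Finset.sum_eq_zero fun k hk => ?_
      rw [Finset.mem_Icc] at hk
      rw [if_neg (by omega)]
    rw [hz]
    simp [STn, Tn]
  · have hn2 : 2 ≤ n := by omega
    have hIcc : Finset.Icc 1 (2 * n) = Finset.Ico 1 (2 * n + 1) := by
      rw [Finset.Ico_add_one_right_eq_Icc]
    rw [hIcc, ← Finset.sum_Ico_consecutive _ (show 1 ≤ n by omega)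
      (show n ≤ 2 * n + 1 by omega)]
    have hzero : ∑ k ∈ Finset.Ico n (2 * n + 1),
        (if k ≤ n - 1 then
          Tn (n - k) + Tn (n - 1 - k) + (k + ∑ j ∈ Finset.Ico k (n - 1), (j + 1))
        else 0) = 0 := by
      refine Finset.sum_eq_zero fun k hk => ?_
      rw [Finset.mem_Ico] at hk
      rw [if_neg (by omega)]
    rw [hzero, add_zero]
    have hmain : ∀ k ∈ Finset.Ico 1 n,
        (if k ≤ n - 1 then
          Tn (n - k) + Tn (n - 1 - k) + (k + ∑ j ∈ Finset.Ico k (n - 1), (j + 1))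
        else 0) =
        Tn (n - k) + Tn (n - 1 - k) + (k + ∑ j ∈ Finset.Ico k (n - 1), (j + 1)) := by
      intro k hk
      rw [Finset.mem_Ico] at hk
      rw [if_pos (by omega)]
    rw [Finset.sum_congr rfl hmain, Finset.sum_add_distrib, Finset.sum_add_distrib,
      Finset.sum_add_distrib, sumP1 hn, sumP2 hn, sumP3 hn, sumQ hn2]
    have e1 : STn n = STn (n - 1) + Tn n := by
      obtain ⟨m, rfl⟩ : ∃ m, n = m + 1 := ⟨n - 1, by omega⟩
      simp only [Nat.add_sub_cancel]
      exact STn_succ m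
    have e2 : STn (n - 1) = STn (n - 2) + Tn (n - 1) := by
      obtain ⟨m, rfl⟩ : ∃ m, n = m + 2 := ⟨n - 2, by omega⟩
      have h1 : m + 2 - 1 = m + 1 := by omega
      have h2 : m + 2 - 2 = m := by omega
      rw [h1, h2]
      exact STn_succ m
    omega

end SymP2


/-- auxiliary development above -/
theorem symbolP2_involutive (n : ℕ) (hn : 1 ≤ n) :
    Module.finrank ℝ (g3P2 n) =
      Module.finrank ℝ (g2P2 n) +
        ∑ k ∈ Finset.Icc 1 (2 * n), Module.finrank ℝ (g2P2e n k) := by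
  classical
  rw [SymP2.g3_finrank hn, SymP2.cardTS, SymP2.cardTSm hn]
  rw [SymP2.g2P2_eq_e0, SymP2.g2e_finrank hn (Nat.zero_le _), SymP2.cardFA 0 (by omega),
    SymP2.cardFB 0 (by omega), SymP2.cardFC 0 hn (by omega)]
  have hsum : ∀ k ∈ Finset.Icc 1 (2 * n), Module.finrank ℝ (g2P2e n k) =
      (if k ≤ n - 1 then
        SymP2.Tn (n - k) + SymP2.Tn (n - 1 - k) +
          (k + ∑ j ∈ Finset.Ico k (n - 1), (j + 1))
      else 0) := by
    intro k hk
    rw [Finset.mem_Icc] at hk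
    by_cases hkn : k ≤ n - 1
    · rw [if_pos hkn, SymP2.g2e_finrank hn hkn, SymP2.cardFA k (by omega),
        SymP2.cardFB k (by omega), SymP2.cardFC k hn hkn]
    · rw [if_neg hkn, SymP2.g2e_bot hn (by omega), finrank_bot]
  rw [Finset.sum_congr rfl hsum]
  have h0 : ∑ j ∈ Finset.Ico 0 (n - 1), (j + 1) = SymP2.Tn (n - 1) := by
    rw [← Finset.range_eq_Ico]
    rfl
  have hn0 : n - 0 = n := rfl
  have hn10 : n - 1 - 0 = n - 1 := rfl
  rw [hn0, hn10, h0, zero_add]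
  have := SymP2.main_arith hn
  omega
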